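/- arXiv:1511.01320 — 3 statements merged into one kernel-verified Lean document; each statement's English description precedes it below -/
import Mathlib

section
/- Let (X,T) be a minimal Cantor system conjugate via φ to the induced system (U, T_U) on a proper nonempty clopen set U ⊊ X. Then sup_{μ ∈ M(X,T)} μ(φ^n(X)) → 0 as n → ∞. In particular, the set ∩_{n∈ℕ} φ^n(X) has measure zero with respect to every T-invariant Borel probability measure. -/
/-!
Compactness and minimality give uniformly bounded return times to every nonempty open set, so
every invariant measure gives `Uᶜ` at least a fixed fraction `1/M` of the total mass:
`μ U ≤ r * μ univ` with `r = 1 - 1/M < 1`. By Kac's lemma the first-return map `T_U` preserves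
`μ` on `U`, hence the pull-back `μ.comap φ` of an invariant measure along the conjugacy `φ` is
again invariant, with total mass `μ U`. Since `μ (φ '' B) = μ.comap φ B`, induction gives
`μ (range φⁿ) ≤ rⁿ * μ univ`.
-/

open Set MeasureTheory Filter

/-- Return time function `r_A(x) = inf {n > 0 : Tⁿ x ∈ A}`. -/
noncomputable def retTime {α : Type*} (T : α → α) (A : Set α) (x : α) : ℕ :=
  sInf {n : ℕ | 0 < n ∧ T^[n] x ∈ A}

/-- Minimality: every (two-sided) orbit is dense. -/
def IsMinimalHomeo {X : Type*} [TopologicalSpace X] (T : X ≃ₜ X) : Prop :=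
  ∀ x : X, Dense {y : X | ∃ n : ℤ, (T.toEquiv ^ n) x = y}

/-- The space of `T`-invariant Borel probability measures. -/
def InvProb {α : Type*} [MeasurableSpace α] (T : α → α) : Type _ :=
  {μ : Measure α // IsProbabilityMeasure μ ∧ ∀ s, MeasurableSet s → μ (T ⁻¹' s) = μ s}

open scoped ENNReal Topology

theorem Homeomorph.coe_toEquiv_zpow {X : Type*} [TopologicalSpace X] (T : X ≃ₜ X) (k : ℤ) :
    ⇑(T.toEquiv ^ k) = ⇑(T ^ k) :=
  congrArg DFunLike.coe
    (map_zpow (⟨⟨Homeomorph.toEquiv, rfl⟩, fun _ _ => rfl⟩ : (X ≃ₜ X) →* Equiv.Perm X) T k).symm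

def ReturnsWithin {α : Type*} (T : α → α) (V : Set α) (N : ℕ) : Prop :=
  ∀ x, ∃ n ∈ Finset.Icc 1 N, T^[n] x ∈ V

theorem IsMinimalHomeo.exists_returnsWithin {X : Type*} [TopologicalSpace X] [CompactSpace X]
    {T : X ≃ₜ X} (hmin : IsMinimalHomeo T) {V : Set X} (hV : IsOpen V) (hne : V.Nonempty) :
    ∃ N, ReturnsWithin (⇑T) V N := by
  have hcover : univ ⊆ ⋃ k : ℤ, ⇑(T ^ k) ⁻¹' V := fun x _ => by
    obtain ⟨_, ⟨k, rfl⟩, hk⟩ := (hmin x).exists_mem_open hV hne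
    exact mem_iUnion.2 ⟨k, by rwa [mem_preimage, ← T.coe_toEquiv_zpow]⟩
  obtain ⟨t, ht⟩ := isCompact_univ.elim_finite_subcover _
    (fun k => hV.preimage (T ^ k).continuous) hcover
  set M := t.sup Int.natAbs
  refine ⟨2 * M + 1, fun x => ?_⟩
  -- The subcover only uses `T ^ k` with `|k| ≤ M`; evaluated at `T^[M + 1] x` it yields a
  -- return time `k + M + 1 ∈ [1, 2M + 1]`.
  obtain ⟨k, hk, hkV⟩ := mem_iUnion₂.1 (ht (mem_univ ((⇑T)^[M + 1] x)))
  have hkM : k.natAbs ≤ M := Finset.le_sup hk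
  refine ⟨(k + (M + 1 : ℕ)).toNat, Finset.mem_Icc.2 ⟨by omega, by omega⟩, ?_⟩
  have hiter (m : ℕ) : (⇑T)^[m] = ⇑(T.toEquiv ^ (m : ℤ)) := by rw [zpow_natCast]; rfl
  rw [mem_preimage, ← T.coe_toEquiv_zpow, hiter] at hkV
  rwa [hiter, Int.toNat_of_nonneg (by omega), zpow_add, Equiv.Perm.mul_apply]

noncomputable def firstReturnMap {α : Type*} (T : α → α) (A : Set α) (x : α) : α :=
  T^[retTime T A x] x

section FirstReturn

variable {α : Type*} {T : α → α} {U : Set α}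

theorem retTime_eq_iff {x : α} {n : ℕ} (hn : 0 < n) :
    retTime T U x = n ↔ T^[n] x ∈ U ∧ ∀ i, 0 < i → i < n → T^[i] x ∉ U := by
  unfold retTime
  constructor
  · rintro rfl
    exact ⟨(Nat.sInf_mem (Nat.nonempty_of_pos_sInf hn)).2,
      fun i hi hin hiU => Nat.notMem_of_lt_sInf hin ⟨hi, hiU⟩⟩
  · rintro ⟨hnU, hlt⟩
    exact le_antisymm (Nat.sInf_le ⟨hn, hnU⟩)
      (le_csInf ⟨n, hn, hnU⟩ fun m ⟨hm, hmU⟩ => not_lt.1 fun hmn => hlt m hm hmn hmU)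

theorem retTime_eq_add_two_iff {x : α} {n : ℕ} :
    retTime T U x = n + 2 ↔ T x ∉ U ∧ retTime T U (T x) = n + 1 := by
  rw [retTime_eq_iff (by omega), retTime_eq_iff (by omega), ← Function.iterate_succ_apply]
  constructor
  · rintro ⟨hU, hlt⟩
    refine ⟨hlt 1 one_pos (by omega), hU, fun i hi hin => ?_⟩
    rw [← Function.iterate_succ_apply]
    exact hlt (i + 1) (by omega) (by omega)
  · rintro ⟨hTx, hU, hlt⟩
    refine ⟨hU, fun i hi hin => ?_⟩
    obtain ⟨j, rfl⟩ : ∃ j, i = j + 1 := ⟨i - 1, by omega⟩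
    rcases j with _ | j
    · simpa using hTx
    · rw [Function.iterate_succ_apply]
      exact hlt (j + 1) (by omega) (by omega)

theorem ReturnsWithin.retTime_mem_Icc {N : ℕ} (hN : ReturnsWithin T U N) (x : α) :
    retTime T U x ∈ Finset.Icc 1 N := by
  obtain ⟨n, hn, hnU⟩ := hN x
  rw [Finset.mem_Icc] at hn ⊢
  have hnS : n ∈ {m | 0 < m ∧ T^[m] x ∈ U} := ⟨by omega, hnU⟩
  exact ⟨(Nat.sInf_mem ⟨n, hnS⟩).1, (Nat.sInf_le hnS).trans hn.2⟩

variable [MeasurableSpace α] {μ : Measure α}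

theorem ReturnsWithin.measure_univ_le {V : Set α} {N : ℕ} (hN : ReturnsWithin T V N)
    (hT : MeasurePreserving T μ μ) (hV : MeasurableSet V) : μ univ ≤ N * μ V := by
  have hcover : univ ⊆ ⋃ n ∈ Finset.Icc 1 N, T^[n] ⁻¹' V := fun x _ => by
    obtain ⟨n, hn, hnV⟩ := hN x
    exact mem_iUnion₂.2 ⟨n, hn, hnV⟩
  calc μ univ ≤ ∑ n ∈ Finset.Icc 1 N, μ (T^[n] ⁻¹' V) :=
        (measure_mono hcover).trans (measure_biUnion_finset_le _ _)
    _ = N * μ V := by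
        rw [Finset.sum_congr rfl fun n _ => (hT.iterate n).measure_preimage hV.nullMeasurableSet,
          Finset.sum_const, Nat.card_Icc, Nat.add_sub_cancel, nsmul_eq_mul]

theorem measure_le_one_sub_inv_mul_measure_univ [IsFiniteMeasure μ] (hU : MeasurableSet U)
    {N : ℕ} (h : μ univ ≤ N * μ Uᶜ) :
    μ U ≤ (1 - (N : ℝ≥0∞)⁻¹) * μ univ := by
  rcases eq_or_ne N 0 with rfl | hN
  · have : μ univ = 0 := by simpa using h
    simp [measure_mono_null (subset_univ U) this]
  have hcompl : (N : ℝ≥0∞)⁻¹ * μ univ ≤ μ Uᶜ := by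
    rwa [ENNReal.inv_mul_le_iff (Nat.cast_ne_zero.2 hN) (ENNReal.natCast_ne_top N)]
  calc μ U = μ univ - μ Uᶜ := by
        rw [← measure_compl hU.compl (measure_ne_top μ _), compl_compl]
    _ ≤ μ univ - (N : ℝ≥0∞)⁻¹ * μ univ := tsub_le_tsub_left hcompl _
    _ = (1 - (N : ℝ≥0∞)⁻¹) * μ univ := by
        rw [ENNReal.sub_mul fun _ _ => measure_ne_top μ univ, one_mul]

theorem measurableSet_retTime_eq (hT : Measurable T) (hU : MeasurableSet U) {n : ℕ} (hn : 0 < n) :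
    MeasurableSet {x | retTime T U x = n} := by
  simp_rw [retTime_eq_iff hn]
  measurability

theorem ReturnsWithin.measure_inter_preimage_firstReturnMap {N : ℕ} (hN : ReturnsWithin T U N)
    (hT : MeasurePreserving T μ μ) (hU : MeasurableSet U) {A : Set α} (hA : MeasurableSet A)
    (hAU : A ⊆ U) : μ (U ∩ firstReturnMap T U ⁻¹' A) = μ A := by
  -- `E n`: points entering `U` for the first time at time `n + 1`, and then landing in `A`.
  -- Splitting `E n` along `U` and using invariance, `μ A` telescopes into `∑ μ (E k ∩ U)`.
  set E : ℕ → Set α := fun n => {x | retTime T U x = n + 1 ∧ T^[n + 1] x ∈ A}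
  have hE_zero : E 0 = T ⁻¹' A := by
    ext x
    change retTime T U x = 0 + 1 ∧ T^[0 + 1] x ∈ A ↔ T x ∈ A
    rw [zero_add, retTime_eq_iff one_pos, Function.iterate_one]
    exact ⟨fun h => h.2, fun h => ⟨⟨hAU h, fun i hi hi1 => absurd hi1 (by omega)⟩, h⟩⟩
  have hE_succ (n : ℕ) : E (n + 1) = T ⁻¹' (E n \ U) := by
    ext x
    simp only [E, mem_ofPred_eq, mem_preimage, Set.mem_sdiff, retTime_eq_add_two_iff,
      Function.iterate_succ_apply]
    tauto
  have hE_meas (n : ℕ) : MeasurableSet (E n) :=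
    (measurableSet_retTime_eq hT.measurable hU n.succ_pos).inter
      ((hT.measurable.iterate _) hA)
  have hE_N : E N = ∅ := eq_empty_of_forall_notMem fun x hx => by
    have := Finset.mem_Icc.1 (hN.retTime_mem_Icc x)
    exact absurd hx.1 (by omega)
  have htelescope (n : ℕ) : μ A = ∑ k ∈ Finset.range n, μ (E k ∩ U) + μ (E n) := by
    induction n with
    | zero =>
      rw [Finset.sum_range_zero, zero_add, hE_zero, hT.measure_preimage hA.nullMeasurableSet]
    | succ n ih =>
      rw [ih, Finset.sum_range_succ, add_assoc, ← measure_inter_add_sdiff (E n) hU, hE_succ,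
        hT.measure_preimage ((hE_meas n).diff hU).nullMeasurableSet]
  have hunion : U ∩ firstReturnMap T U ⁻¹' A = ⋃ k ∈ Finset.range N, E k ∩ U := by
    ext x
    have := Finset.mem_Icc.1 (hN.retTime_mem_Icc x)
    simp only [mem_inter_iff, mem_preimage, mem_iUnion, Finset.mem_range, E, mem_ofPred_eq,
      firstReturnMap]
    constructor
    · rintro ⟨hxU, hxA⟩
      exact ⟨retTime T U x - 1, by omega, ⟨by omega, by rwa [Nat.sub_add_cancel this.1]⟩, hxU⟩
    · rintro ⟨k, -, ⟨hk, hkA⟩, hxU⟩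
      exact ⟨hxU, hk ▸ hkA⟩
  have hdisj : (Finset.range N : Set ℕ).PairwiseDisjoint fun k => E k ∩ U :=
    fun j _ k _ hjk => disjoint_left.2 fun x hj hk => hjk (by linarith [hj.1.1, hk.1.1])
  rw [hunion, measure_biUnion_finset hdisj fun k _ => (hE_meas k).inter hU, htelescope N, hE_N,
    measure_empty, add_zero]

theorem ReturnsWithin.measurePreserving_comap {β : Type*} [MeasurableSpace β] {S : β → β}
    {φ : β → α} {N : ℕ} (hN : ReturnsWithin T U N) (hT : MeasurePreserving T μ μ)
    (hU : MeasurableSet U) (hS : Measurable S) (hφ : MeasurableEmbedding φ) (hφU : range φ = U)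
    (hconj : Function.Semiconj φ S (firstReturnMap T U)) :
    MeasurePreserving S (μ.comap φ) (μ.comap φ) := by
  refine ⟨hS, Measure.ext fun s hs => ?_⟩
  have himage : φ '' (S ⁻¹' s) = U ∩ firstReturnMap T U ⁻¹' (φ '' s) := by
    ext u
    constructor
    · rintro ⟨x, hx, rfl⟩
      exact ⟨hφU ▸ mem_range_self x, S x, hx, hconj x⟩
    · rintro ⟨hu, y, hy, hyu⟩
      obtain ⟨x, rfl⟩ : u ∈ range φ := hφU ▸ hu
      exact ⟨x, by rwa [mem_preimage, ← hφ.injective (hyu.trans (hconj x).symm)], rfl⟩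
  rw [Measure.map_apply hS hs, hφ.comap_apply, hφ.comap_apply, himage,
    hN.measure_inter_preimage_firstReturnMap hT hU (hφ.measurableSet_image' hs)
      (hφU ▸ image_subset_range φ s)]

theorem ReturnsWithin.measure_range_iterate_le {φ : α → α} {N : ℕ} (hN : ReturnsWithin T U N)
    (hU : MeasurableSet U) (hT : Measurable T) (hφ : MeasurableEmbedding φ) (hφU : range φ = U)
    (hconj : Function.Semiconj φ T (firstReturnMap T U)) {r : ℝ≥0∞}
    (hr : ∀ (ν : Measure α) [IsFiniteMeasure ν], MeasurePreserving T ν ν → ν U ≤ r * ν univ)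
    (n : ℕ) (μ : Measure α) [IsFiniteMeasure μ] (hμ : MeasurePreserving T μ μ) :
    μ (range φ^[n]) ≤ r ^ n * μ univ := by
  induction n generalizing μ with
  | zero => simp
  | succ n ih =>
    calc μ (range φ^[n + 1]) = μ.comap φ (range φ^[n]) := by
          rw [Function.iterate_succ', range_comp, hφ.comap_apply]
      _ ≤ r ^ n * μ.comap φ univ := ih _ (hN.measurePreserving_comap hμ hU hT hφ hφU hconj)
      _ = r ^ n * μ U := by rw [hφ.comap_apply, image_univ, hφU]
      _ ≤ r ^ n * (r * μ univ) := by gcongr; exact hr μ hμ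
      _ = r ^ (n + 1) * μ univ := by ring

end FirstReturn

theorem InvProb.measurePreserving {α : Type*} [MeasurableSpace α] {T : α → α} (hT : Measurable T)
    (μ : InvProb T) : MeasurePreserving T μ.1 μ.1 :=
  ⟨hT, Measure.ext fun s hs => by rw [Measure.map_apply hT hs, μ.2.2 s hs]⟩

theorem stmt5_general {X : Type*} [MetricSpace X] [CompactSpace X]
    [MeasurableSpace X] [BorelSpace X]
    (T : X ≃ₜ X) (hmin : IsMinimalHomeo T)
    (U : Set X) (hU : IsClopen U) (hne : U.Nonempty) (hproper : U ≠ univ)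
    (φ : X → X) (hφc : Continuous φ) (hφi : Function.Injective φ)
    (hφr : Set.range φ = U)
    (hconj : ∀ x : X, φ (T x) = (⇑T)^[retTime (⇑T) U (φ x)] (φ x)) :
    Tendsto (fun n : ℕ => ⨆ μ : InvProb (⇑T), μ.1 (Set.range (φ^[n]))) atTop (nhds 0) ∧
    ∀ μ : InvProb (⇑T), μ.1 (⋂ n : ℕ, Set.range (φ^[n])) = 0 := by
  have hφ : MeasurableEmbedding φ := (hφc.isClosedEmbedding hφi).measurableEmbedding
  obtain ⟨N, hN⟩ := hmin.exists_returnsWithin hU.isOpen hne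
  obtain ⟨M, hM⟩ := hmin.exists_returnsWithin hU.isClosed.isOpen_compl (nonempty_compl.2 hproper)
  have hUm : MeasurableSet U := hU.isOpen.measurableSet
  set r : ℝ≥0∞ := 1 - (M : ℝ≥0∞)⁻¹
  have hr : r < 1 := ENNReal.sub_lt_self ENNReal.one_ne_top one_ne_zero
    (ENNReal.inv_ne_zero.2 (ENNReal.natCast_ne_top M))
  have hbound (μ : InvProb ⇑T) (n : ℕ) : μ.1 (range φ^[n]) ≤ r ^ n := by
    have := μ.2.1
    simpa using hN.measure_range_iterate_le hUm T.measurable hφ hφr hconj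
      (fun ν _ hν => measure_le_one_sub_inv_mul_measure_univ hUm
        (hM.measure_univ_le hν hUm.compl)) n μ.1 (μ.measurePreserving T.measurable)
  have hpow : Tendsto (r ^ ·) atTop (𝓝 0) := ENNReal.tendsto_pow_atTop_nhds_zero_of_lt_one hr
  exact ⟨tendsto_of_tendsto_of_tendsto_of_le_of_le tendsto_const_nhds hpow (fun _ => zero_le)
      fun n => iSup_le (hbound · n),
    fun μ => le_antisymm (ge_of_tendsto' hpow fun n =>
      (measure_mono (iInter_subset _ n)).trans (hbound μ n)) zero_le⟩

theorem stmt5 {X : Type*} [MetricSpace X] [CompactSpace X]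
    [TotallyDisconnectedSpace X] [PerfectSpace X]
    [MeasurableSpace X] [BorelSpace X]
    (T : X ≃ₜ X) (hmin : IsMinimalHomeo T)
    (U : Set X) (hU : IsClopen U) (hne : U.Nonempty) (hproper : U ≠ univ)
    (φ : X → X) (hφc : Continuous φ) (hφi : Function.Injective φ)
    (hφr : Set.range φ = U)
    (hconj : ∀ x : X, φ (T x) = (⇑T)^[retTime (⇑T) U (φ x)] (φ x)) :
    Tendsto (fun n : ℕ => ⨆ μ : InvProb (⇑T), μ.1 (Set.range (φ^[n]))) atTop (nhds 0) ∧
    ∀ μ : InvProb (⇑T), μ.1 (⋂ n : ℕ, Set.range (φ^[n])) = 0 :=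
  stmt5_general T hmin U hU hne hproper φ hφc hφi hφr hconj
end

section
/- Let (q_n) and (q'_n) be sequences of integers ≥ 2 with partial products p_n = q_1⋯q_n and p'_n = q'_1⋯q'_n. The odometers (ℤ_{(q'_n)}, R) and (ℤ_{(q_n)}, R) are topologically conjugate if and only if the groups of adic rationals ℚ_{(q'_n)} = {j/p'_n : j ∈ ℤ, n ≥ 1} and ℚ_{(q_n)} = {j/p_n : j ∈ ℤ, n ≥ 1} are equal as subgroups of ℚ. -/
open Set

/-- Partial products `p_n = q_1 ⋯ q_n` (indexed from 0: `pp q n = q 0 * ⋯ * q n`). -/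
def pp (q : ℕ → ℕ) (n : ℕ) : ℕ := ∏ i ∈ Finset.range (n + 1), q i

theorem pp_dvd (q : ℕ → ℕ) (n : ℕ) : pp q n ∣ pp q (n + 1) := by
  simp [pp, Finset.prod_range_succ]

instance (n : ℕ) : TopologicalSpace (ZMod n) := ⊥
instance (n : ℕ) : DiscreteTopology (ZMod n) := ⟨rfl⟩

/-- The `(q_n)`-adic integers: the inverse limit of the `ℤ/p_nℤ`. -/
abbrev Odo (q : ℕ → ℕ) : Type :=
  {x : ∀ n, ZMod (pp q n) // ∀ n, ZMod.castHom (pp_dvd q n) (ZMod (pp q n)) (x (n + 1)) = x n}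

/-- The odometer map: addition of `1`. -/
def odoR (q : ℕ → ℕ) : Odo q → Odo q :=
  fun x => ⟨fun n => x.1 n + 1, fun n => by rw [map_add, map_one, x.2 n]⟩

/-!
A continuous map `f : ℤ_{(q_n)} → ℤ/kℤ` with `f (x + 1) = f x + 1` forces `k ∣ p_m` for some `m`:
`x + p_m → x` as `m → ∞`, so `f x + p_m = f (x + p_m)` is eventually `f x`. Applied to the
coordinates of a conjugacy and of its inverse, this shows that the two sequences `(p_n)`, `(p'_n)`
divide into each other, which is exactly the equality of the groups of adic rationals. Conversely,
mutual divisibility lets each coordinate of one odometer be read off a coordinate of the other,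
giving mutually inverse continuous maps commuting with `+1`.
-/

open Filter Topology Function

def adicRationals (a : ℕ → ℕ) : Set ℚ := {r | ∃ (j : ℤ) (n : ℕ), r = (j : ℚ) / (a n : ℚ)}

theorem adicRationals_subset_iff {a b : ℕ → ℕ} (ha : ∀ n, a n ≠ 0) (hb : ∀ n, b n ≠ 0) :
    adicRationals a ⊆ adicRationals b ↔ ∀ n, ∃ m, a n ∣ b m := by
  constructor
  · intro h n
    obtain ⟨j, m, hjm⟩ := h ⟨1, n, rfl⟩
    rw [Int.cast_one, div_eq_div_iff (Nat.cast_ne_zero.mpr (ha n)) (Nat.cast_ne_zero.mpr (hb m)),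
      one_mul] at hjm
    exact ⟨m, Int.natCast_dvd_natCast.mp ⟨j, by rw [mul_comm]; exact_mod_cast hjm⟩⟩
  · rintro h r ⟨j, n, rfl⟩
    obtain ⟨m, c, hc⟩ := h n
    have hc0 : (c : ℚ) ≠ 0 := Nat.cast_ne_zero.mpr (right_ne_zero_of_mul (hc ▸ hb m))
    refine ⟨j * c, m, ?_⟩
    rw [hc, Nat.cast_mul, Int.cast_mul, Int.cast_natCast, mul_div_mul_right _ _ hc0]

theorem pp_ne_zero {q : ℕ → ℕ} (hq : ∀ n, q n ≠ 0) (n : ℕ) : pp q n ≠ 0 :=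
  Finset.prod_ne_zero_iff.mpr fun i _ => hq i

theorem pp_dvd_pp {q : ℕ → ℕ} {a b : ℕ} (h : a ≤ b) : pp q a ∣ pp q b :=
  Finset.prod_dvd_prod_of_subset _ _ _ (Finset.range_subset_range.mpr (by omega))

namespace Odo

variable {q q' : ℕ → ℕ}

theorem castHom_apply_of_le (x : Odo q) {a b : ℕ} (h : a ≤ b) :
    ZMod.castHom (pp_dvd_pp h) (ZMod (pp q a)) (x.1 b) = x.1 a := by
  induction b, h using Nat.le_induction with
  | base => simp
  | succ b hb ih => rw [← ih, ← x.2 b, ← RingHom.comp_apply, ZMod.castHom_comp]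

theorem castHom_apply_eq (x : Odo q) {k a b : ℕ} (ha : k ∣ pp q a) (hb : k ∣ pp q b) :
    ZMod.castHom ha (ZMod k) (x.1 a) = ZMod.castHom hb (ZMod k) (x.1 b) := by
  wlog hab : a ≤ b generalizing a b
  · exact (this hb ha (le_of_not_ge hab)).symm
  rw [← castHom_apply_of_le x hab, ← RingHom.comp_apply, ZMod.castHom_comp]

theorem semiconj_coord (n : ℕ) : Semiconj (fun x : Odo q => x.1 n) (odoR q) (· + 1) :=
  fun _ => rfl

theorem tendsto_iterate_odoR_pp (x : Odo q) :
    Tendsto (fun m => (odoR q)^[pp q m] x) atTop (𝓝 x) := by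
  refine tendsto_subtype_rng.mpr (tendsto_pi_nhds.mpr fun n => tendsto_const_nhds.congr' ?_)
  filter_upwards [eventually_ge_atTop n] with m hm
  refine (((semiconj_coord n).iterate_right _ x).trans ?_).symm
  rw [add_right_iterate_apply, nsmul_one,
    (ZMod.natCast_eq_zero_iff _ _).mpr (pp_dvd_pp hm), add_zero]

theorem exists_dvd_pp_of_semiconj {k : ℕ} {f : Odo q → ZMod k} (hf : Continuous f)
    (hfR : Semiconj f (odoR q) (· + 1)) : ∃ m, k ∣ pp q m := by
  let x : Odo q := ⟨fun _ => 0, fun _ => map_zero _⟩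
  have hlim := (hf.tendsto x).comp (tendsto_iterate_odoR_pp x)
  rw [nhds_discrete, tendsto_pure] at hlim
  obtain ⟨m, hm⟩ := hlim.exists
  rw [comp_apply, hfR.iterate_right _ x, add_right_iterate_apply, nsmul_one, add_eq_left] at hm
  exact ⟨m, (ZMod.natCast_eq_zero_iff _ _).mp hm⟩

theorem exists_pp_dvd_of_semiconj {f : Odo q → Odo q'} (hf : Continuous f)
    (hfR : Semiconj f (odoR q) (odoR q')) (n : ℕ) : ∃ m, pp q' n ∣ pp q m :=
  exists_dvd_pp_of_semiconj ((continuous_apply n).comp (continuous_subtype_val.comp hf))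
    ((semiconj_coord n).comp_left hfR)

noncomputable def ofDvd (d : ∀ n, ∃ m, pp q' n ∣ pp q m) (x : Odo q) : Odo q' :=
  ⟨fun n => ZMod.castHom (d n).choose_spec (ZMod (pp q' n)) (x.1 (d n).choose), fun n => by
    rw [← RingHom.comp_apply, ZMod.castHom_comp]
    exact castHom_apply_eq x _ _⟩

variable (d : ∀ n, ∃ m, pp q' n ∣ pp q m) (d' : ∀ n, ∃ m, pp q n ∣ pp q' m)

theorem continuous_ofDvd : Continuous (ofDvd d) :=
  Continuous.subtype_mk (continuous_pi fun _ =>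
    continuous_of_discreteTopology.comp ((continuous_apply _).comp continuous_subtype_val)) _

theorem semiconj_ofDvd : Semiconj (ofDvd d) (odoR q) (odoR q') := fun _ =>
  Subtype.ext <| funext fun _ => by
    change ZMod.castHom _ _ (_ + 1) = ZMod.castHom _ _ _ + 1
    rw [map_add, map_one]

theorem ofDvd_ofDvd (x : Odo q) : ofDvd d' (ofDvd d x) = x := by
  refine Subtype.ext <| funext fun n => ?_
  change ZMod.castHom _ _ (ZMod.castHom _ _ (x.1 _)) = x.1 n
  rw [← RingHom.comp_apply, ZMod.castHom_comp, castHom_apply_eq x _ (dvd_refl (pp q n)),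
    ZMod.castHom_apply, ZMod.cast_id]

noncomputable def homeomorphOfDvd : Odo q ≃ₜ Odo q' where
  toFun := ofDvd d
  invFun := ofDvd d'
  left_inv := ofDvd_ofDvd d d'
  right_inv := ofDvd_ofDvd d' d
  continuous_toFun := continuous_ofDvd d
  continuous_invFun := continuous_ofDvd d'

theorem exists_conj_iff :
    (∃ h : Odo q ≃ₜ Odo q', Semiconj h (odoR q) (odoR q')) ↔
      (∀ n, ∃ m, pp q' n ∣ pp q m) ∧ ∀ n, ∃ m, pp q n ∣ pp q' m := by
  constructor
  · rintro ⟨h, hR⟩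
    exact ⟨exists_pp_dvd_of_semiconj h.continuous hR, exists_pp_dvd_of_semiconj
      h.symm.continuous (hR.inverse_left h.symm_apply_apply h.apply_symm_apply)⟩
  · rintro ⟨d, d'⟩
    exact ⟨homeomorphOfDvd d d', semiconj_ofDvd d⟩

end Odo

theorem stmt9 (q q' : ℕ → ℕ) (hq : ∀ n, 2 ≤ q n) (hq' : ∀ n, 2 ≤ q' n) :
    (∃ h : Odo q ≃ₜ Odo q', ∀ x : Odo q, h (odoR q x) = odoR q' (h x)) ↔
    ({r : ℚ | ∃ (j : ℤ) (n : ℕ), r = (j : ℚ) / (pp q n : ℚ)} =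
      {r : ℚ | ∃ (j : ℤ) (n : ℕ), r = (j : ℚ) / (pp q' n : ℚ)}) := by
  have hp : ∀ n, pp q n ≠ 0 := pp_ne_zero fun n => by have := hq n; omega
  have hp' : ∀ n, pp q' n ≠ 0 := pp_ne_zero fun n => by have := hq' n; omega
  refine Odo.exists_conj_iff.trans ?_
  change _ ↔ adicRationals (pp q) = adicRationals (pp q')
  rw [Subset.antisymm_iff, adicRationals_subset_iff hp hp',
    adicRationals_subset_iff hp' hp, and_comm]
end

section
/- Let σ: K → K⁺ be a primitive generalized substitution on an alphabet space K. Then the generalized subshift (X_σ, S), consisting of all bi-infinite sequences over K all of whose finite subwords belong to L(σ), is minimal. -/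
open Set Filter

/-- The shift by `n`: `(shiftZ n x) t = x (t + n)`. -/
def shiftZ {A : Type*} (n : ℤ) (x : ℤ → A) : ℤ → A := fun t => x (t + n)

/-- The extension of a substitution to words, by concatenation. -/
def substWord {A : Type*} (σ : A → List A) (w : List A) : List A :=
  w.foldr (fun a r => σ a ++ r) []

/-- The word `x[i..j]` read off a bi-infinite sequence. -/
def window {A : Type*} (x : ℤ → A) (i j : ℤ) : List A :=
  (List.range (j - i + 1).toNat).map fun t => x (i + t)

section Gen

variable {K : Type*} [MetricSpace K] [CompactSpace K] [TotallyDisconnectedSpace K]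
  [Nontrivial K] [Inhabited K]

/-- A generalized substitution: images are nonempty words, the length function is
continuous, and each coordinate projection is continuous where defined. -/
def IsGenSubst (σ : K → List K) : Prop :=
  (∀ a, σ a ≠ []) ∧ Continuous (fun a => (σ a).length) ∧
    ∀ j : ℕ, ContinuousOn (fun a => (σ a).getD j default) {a | j < (σ a).length}

/-- Primitivity: for every nonempty open `V ⊆ K` there is `j` such that for every
letter `a` and every `k ≥ j`, some letter of `σᵏ(a)` lies in `V`. -/
def GPrimitive (σ : K → List K) : Prop :=
  ∀ V : Set K, IsOpen V → V.Nonempty →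
    ∃ j : ℕ, ∀ a : K, ∀ k : ℕ, j ≤ k → ∃ c ∈ (substWord σ)^[k] [a], c ∈ V

/-- Starting position of the `i`-th block in the concatenation `… σ(x₋₁).σ(x₀)σ(x₁) …`. -/
def blockStart (σ : K → List K) (x : ℤ → K) : ℤ → ℤ := fun i =>
  if 0 ≤ i then (∑ t ∈ Finset.range i.toNat, ((σ (x t)).length : ℤ))
  else -(∑ t ∈ Finset.range (-i).toNat, ((σ (x (-((t : ℤ) + 1)))).length : ℤ))

/-- `E` is the extension of `σ` to bi-infinite sequences: it maps `x` to the
concatenation of the words `σ(x_i)`, with `σ(x₀)` starting at position `0`. -/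
def IsSubstExt (σ : K → List K) (E : (ℤ → K) → (ℤ → K)) : Prop :=
  ∀ (x : ℤ → K) (i : ℤ) (j : ℕ), j < (σ (x i)).length →
    E x (blockStart σ x i + j) = (σ (x i)).getD j default

/-- The language generated by a letter `a`: limits of subwords of the `σᵏ(a)`. -/
def GLang (σ : K → List K) (a : K) : Set (List K) :=
  closure {w : List K | ∃ k : ℕ, w <:+: (substWord σ)^[k] [a]}

/-- The generalized substitution subshift. -/
def GXsub (σ : K → List K) : Set (ℤ → K) :=
  {x | ∀ i j : ℤ, i ≤ j → window x i j ∈ ⋃ a : K, GLang σ a}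

end Gen


/-! Every word `w` of the language is letterwise close to a factor of some `σᵏ(a)`. By continuity
of `σᵏ`, it is also close to a factor of `σᵏ(c')` for every `c'` near `a`, and by primitivity
every `σᵏ⁺ʲ(c)` contains such a `σᵏ(c')`. Since the lengths of the `σ(a)` are bounded (by
compactness), every long factor of some `σᵐ(b)` contains a whole block `σᵏ⁺ʲ(c)`. So every long
word of the language contains an approximate copy of `w`: each window of `y ∈ X_σ` reappears, up
to `ε`, in every `x ∈ X_σ`, and the orbit of `x` is dense. -/

open List Topology

section Words

variable {α : Type*}

theorem substWord_eq_flatMap (σ : α → List α) (w : List α) :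
    substWord σ w = w.flatMap σ := by
  induction w with
  | nil => rfl
  | cons a w ih => simp [substWord, ← ih]

theorem iterate_substWord_eq_flatMap (σ : α → List α) (k : ℕ) (w : List α) :
    (substWord σ)^[k] w = w.flatMap fun c => (substWord σ)^[k] [c] := by
  induction k generalizing w with
  | zero => simp
  | succ k ih =>
    rw [Function.iterate_succ_apply, ih, substWord_eq_flatMap, flatMap_assoc]
    congr 1
    funext c
    rw [Function.iterate_succ_apply, ih (substWord σ [c]), substWord_eq_flatMap,
      flatMap_singleton]

theorem iterate_substWord_add (σ : α → List α) (m n : ℕ) (a : α) :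
    (substWord σ)^[m + n] [a] = ((substWord σ)^[n] [a]).flatMap fun c => (substWord σ)^[m] [c] := by
  rw [Function.iterate_add_apply, iterate_substWord_eq_flatMap]

theorem iterate_substWord_ne_nil {σ : α → List α} (hσ : ∀ a, σ a ≠ []) (k : ℕ) (a : α) :
    (substWord σ)^[k] [a] ≠ [] := by
  induction k with
  | zero => simp
  | succ k ih =>
    rw [Function.iterate_succ_apply', substWord_eq_flatMap, Ne, flatMap_eq_nil_iff]
    obtain ⟨c, hc⟩ := exists_mem_of_ne_nil _ ih
    exact fun h => hσ c (h c hc)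

theorem length_iterate_substWord_le {σ : α → List α} {C : ℕ} (hC : ∀ a, (σ a).length ≤ C)
    (k : ℕ) (a : α) : ((substWord σ)^[k] [a]).length ≤ C ^ k := by
  induction k with
  | zero => simp
  | succ k ih =>
    rw [Function.iterate_succ_apply', substWord_eq_flatMap, length_flatMap, pow_succ']
    calc (((substWord σ)^[k] [a]).map fun c => (σ c).length).sum
        ≤ ((substWord σ)^[k] [a]).length * C := by
          simpa using sum_le_card_nsmul (((substWord σ)^[k] [a]).map fun c => (σ c).length) C
            (by simp [hC])
      _ ≤ C * C ^ k := by rw [mul_comm]; exact Nat.mul_le_mul_left C ih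

-- The part `s` preceding the factor `u` is kept so that the induction can strip whole blocks.
theorem exists_infix_of_append_prefix_flatMap {β : Type*} {f : α → List β} {L : ℕ} (hL : 0 < L)
    {l : List α} (hf : ∀ c ∈ l, f c ≠ [] ∧ (f c).length ≤ L) {s u : List β}
    (h : s ++ u <+: l.flatMap f) (hu : 2 * L ≤ u.length) : ∃ c ∈ l, f c <:+: u := by
  induction l generalizing s with
  | nil =>
    have := h.length_le
    simp only [flatMap_nil, length_append, length_nil] at this
    omega
  | cons c l ih =>
    rw [flatMap_cons] at h
    have hfl : ∀ d ∈ l, f d ≠ [] ∧ (f d).length ≤ L := fun d hd => hf d (mem_cons_of_mem c hd)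
    by_cases hcs : (f c).length ≤ s.length
    · obtain ⟨s', rfl⟩ := prefix_of_prefix_length_le (prefix_append _ _)
        ((prefix_append s u).trans h) hcs
      obtain ⟨d, hd, hdu⟩ := ih hfl (s := s') (by simpa using h)
      exact ⟨d, mem_cons_of_mem c hd, hdu⟩
    · have hdrop : u.drop ((f c).length - s.length) <+: l.flatMap f := by
        simpa [drop_append, drop_eq_nil_of_le (show s.length ≤ (f c).length by omega)] using
          h.drop (f c).length
      have hlen : L ≤ (u.drop ((f c).length - s.length)).length := by
        have := (hf c mem_cons_self).2
        simp only [length_drop]; omega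
      obtain ⟨d, l', rfl⟩ : ∃ d l', l = d :: l' := by
        refine ne_nil_iff_exists_cons.1 fun hl => ?_
        subst hl
        have := hdrop.length_le
        simp only [flatMap_nil, length_nil] at this
        omega
      have hd := hf d (mem_cons_of_mem c mem_cons_self)
      refine ⟨d, mem_cons_of_mem c mem_cons_self, ?_⟩
      rw [flatMap_cons] at hdrop
      exact (prefix_of_prefix_length_le (prefix_append _ _) hdrop (hd.2.trans hlen)).isInfix.trans
        (drop_suffix _ u).isInfix

theorem exists_iterate_infix_of_infix_iterate {σ : α → List α}
    (hne : ∀ a, σ a ≠ []) {C : ℕ} (hC : ∀ a, (σ a).length ≤ C) (hC₀ : 0 < C) (n : ℕ)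
    {k : ℕ} {b : α} {u : List α} (hu : u <:+: (substWord σ)^[k] [b])
    (hlen : 2 * C ^ n ≤ u.length) : ∃ c, (substWord σ)^[n] [c] <:+: u := by
  have hnk : n ≤ k := by
    by_contra! hkn
    have := Nat.pow_le_pow_right hC₀ hkn.le
    have := pow_pos hC₀ n
    have := hu.length_le.trans (length_iterate_substWord_le hC k b)
    omega
  rw [← Nat.add_sub_cancel' hnk, iterate_substWord_add] at hu
  obtain ⟨s, t, h⟩ := hu
  obtain ⟨c, -, hc⟩ := exists_infix_of_append_prefix_flatMap (pow_pos hC₀ n)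
    (fun c _ => ⟨iterate_substWord_ne_nil hne n c, length_iterate_substWord_le hC n c⟩) ⟨t, h⟩ hlen
  exact ⟨c, hc⟩

end Words

theorem List.Forall₂.exists_infix {α β : Type*} {R : α → β → Prop} {v : List α} {w u : List β}
    (h : Forall₂ R v w) (hu : u <:+: w) : ∃ u', u' <:+: v ∧ Forall₂ R u' u := by
  obtain ⟨s, t, rfl⟩ := hu
  rw [append_assoc] at h
  exact ⟨(v.drop s.length).take u.length, (take_prefix _ _).isInfix.trans (drop_suffix _ _).isInfix,
    forall₂_take_append _ _ t (forall₂_drop_append _ _ _ h)⟩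

theorem List.Forall₂.dist_lt_add {X : Type*} [PseudoMetricSpace X] {u v w : List X} {ε₁ ε₂ : ℝ}
    (h₁ : Forall₂ (fun a b => dist a b < ε₁) u v) (h₂ : Forall₂ (fun a b => dist a b < ε₂) v w) :
    Forall₂ (fun a b => dist a b < ε₁ + ε₂) u w := by
  induction h₁ generalizing w with
  | nil => rw [forall₂_nil_left_iff.1 h₂]; exact .nil
  | cons hab _ ih =>
    cases h₂ with
    | cons hbc h₂ => exact .cons ((dist_triangle _ _ _).trans_lt (add_lt_add hab hbc)) (ih h₂)

theorem List.eventually_forall₂_nhds {X : Type*} [TopologicalSpace X] {R : X → X → Prop}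
    (hR : ∀ b, ∀ᶠ a in 𝓝 b, R a b) (w : List X) : ∀ᶠ v in 𝓝 w, Forall₂ R v w := by
  induction w with
  | nil => simp [nhds_nil]
  | cons b w ih =>
    have : Tendsto id (𝓝 (b :: w)) (𝓟 {v | Forall₂ R v (b :: w)}) :=
      tendsto_cons_iff.2 <| tendsto_principal.2 <|
        ((hR b).prod_mk ih).mono fun _ hp => .cons hp.1 hp.2
    exact tendsto_principal.1 this

theorem exists_forall₂_dist_lt_of_mem_closure {X : Type*} [PseudoMetricSpace X]
    {S : Set (List X)} {w : List X} (hw : w ∈ closure S) {ε : ℝ} (hε : 0 < ε) :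
    ∃ u ∈ S, Forall₂ (fun a b => dist a b < ε) u w :=
  ((mem_closure_iff_frequently.1 hw).and_eventually
    (eventually_forall₂_nhds (fun b => Metric.ball_mem_nhds b hε) w)).exists

theorem mem_closure_of_forall_dist_lt {X : Type*} [PseudoMetricSpace X] {S : Set (ℤ → X)}
    {y : ℤ → X}
    (h : ∀ (N : ℕ) (ε : ℝ), 0 < ε → ∃ z ∈ S, ∀ i : ℤ, i.natAbs ≤ N → dist (z i) (y i) < ε) :
    y ∈ closure S := by
  rw [mem_closure_iff_nhds, nhds_pi]
  intro U hU
  obtain ⟨I, t, ht, hIt⟩ := Filter.mem_pi'.1 hU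
  have hball : ∀ᶠ ε in 𝓝[>] (0 : ℝ), ∀ i ∈ I, Metric.ball (y i) ε ⊆ t i := by
    refine (eventually_all_finset I).2 fun i _ => ?_
    obtain ⟨r, hr, hrt⟩ := Metric.mem_nhds_iff.1 (ht i)
    exact (eventually_nhdsWithin_of_eventually_nhds (eventually_lt_nhds hr)).mono
      fun ε hε => (Metric.ball_subset_ball hε.le).trans hrt
  obtain ⟨ε, hεI, hε⟩ := (hball.and self_mem_nhdsWithin).exists
  obtain ⟨z, hzS, hz⟩ := h (I.sup Int.natAbs) ε hε
  exact ⟨z, hIt fun i hi => hεI i hi (hz i (Finset.le_sup (f := Int.natAbs) hi)), hzS⟩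

theorem length_window {α : Type*} (x : ℤ → α) (i j : ℤ) :
    (window x i j).length = (j - i + 1).toNat := by
  simp [window]

theorem getElem_window {α : Type*} (x : ℤ → α) (i j : ℤ) (k : ℕ)
    (hk : k < (window x i j).length) : (window x i j)[k] = x (i + k) := by
  simp [window, ← map_eq_flatMap]

theorem exists_getElem_eq_of_infix_window {α : Type*} {u : List α} {x : ℤ → α} {i j : ℤ}
    (hu : u <:+: window x i j) : ∃ p : ℤ, ∀ k (hk : k < u.length), u[k] = x (p + k) := by
  obtain ⟨m, hm, h⟩ := infix_iff_getElem?.1 hu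
  refine ⟨i + m, fun k hk => ?_⟩
  have := h k hk
  rw [getElem?_eq_getElem (by omega), getElem_window, Option.some_inj] at this
  rw [← this]
  congr 1
  push_cast
  ring

section GenSubst

variable {K : Type*} [MetricSpace K] [Inhabited K] {σ : K → List K}

theorem IsGenSubst.eventually_forall₂ (hσ : IsGenSubst σ) {R : K → K → Prop}
    (hR : ∀ b, ∀ᶠ a in 𝓝 b, R a b) (c : K) : ∀ᶠ c' in 𝓝 c, Forall₂ R (σ c') (σ c) := by
  have hlen : ∀ᶠ c' in 𝓝 c, (σ c').length = (σ c).length :=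
    hσ.2.1.continuousAt.eventually (p := (· = (σ c).length)) (by simp [nhds_discrete])
  have hcoord : ∀ᶠ c' in 𝓝 c, ∀ j : Fin (σ c).length,
      R ((σ c').getD j default) ((σ c).getD j default) := by
    refine eventually_all.2 fun j => ?_
    have hopen : IsOpen {a | j < (σ a).length} := (isOpen_discrete {m | j < m}).preimage hσ.2.1
    exact ((hσ.2.2 j).continuousAt (hopen.mem_nhds j.2)).eventually (hR _)
  filter_upwards [hlen, hcoord] with c' hl hj
  refine forall₂_of_length_eq_of_get hl fun i h₁ h₂ => ?_
  simpa [getD_eq_getElem, h₁, h₂] using hj ⟨i, h₂⟩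

theorem IsGenSubst.eventually_forall₂_iterate (hσ : IsGenSubst σ) (k : ℕ) {R : K → K → Prop}
    (hR : ∀ b, ∀ᶠ a in 𝓝 b, R a b) (a : K) :
    ∀ᶠ b in 𝓝 a, Forall₂ R ((substWord σ)^[k] [b]) ((substWord σ)^[k] [a]) := by
  induction k generalizing R with
  | zero => simpa using hR a
  | succ k ih =>
    simp only [Function.iterate_succ_apply', substWord_eq_flatMap]
    exact (ih (hσ.eventually_forall₂ hR)).mono fun b hb => rel_flatMap hb fun _ _ h => h

theorem GPrimitive.exists_forall_exists_infix (hprim : GPrimitive σ) (hσ : IsGenSubst σ)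
    {a : K} {w : List K} (hw : w ∈ GLang σ a) {δ : ℝ} (hδ : 0 < δ) :
    ∃ n, ∀ c, ∃ u, u <:+: (substWord σ)^[n] [c] ∧ Forall₂ (fun a b => dist a b < δ + δ) u w := by
  obtain ⟨u₀, ⟨k, hk⟩, hu₀⟩ := exists_forall₂_dist_lt_of_mem_closure hw hδ
  obtain ⟨V, hV, hVopen, haV⟩ := eventually_nhds_iff.1
    (hσ.eventually_forall₂_iterate k (fun b => Metric.ball_mem_nhds b hδ) a)
  obtain ⟨j, hj⟩ := hprim V hVopen ⟨a, haV⟩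
  refine ⟨k + j, fun c => ?_⟩
  obtain ⟨c', hc', hc'V⟩ := hj c j le_rfl
  obtain ⟨u, hu, huu₀⟩ := (hV c' hc'V).exists_infix hk
  refine ⟨u, hu.trans ?_, huu₀.dist_lt_add hu₀⟩
  rw [iterate_substWord_add]
  exact infix_flatMap_of_mem hc' fun d => (substWord σ)^[k] [d]

theorem GPrimitive.exists_forall_length_le_exists_infix [CompactSpace K]
    (hprim : GPrimitive σ) (hσ : IsGenSubst σ) {a : K} {w : List K} (hw : w ∈ GLang σ a)
    {ε : ℝ} (hε : 0 < ε) : ∃ M : ℕ, ∀ b, ∀ v ∈ GLang σ b, M ≤ v.length →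
      ∃ u, u <:+: v ∧ Forall₂ (fun a b => dist a b < ε) u w := by
  obtain ⟨C, hC⟩ := (isCompact_range hσ.2.1).bddAbove
  have hC₀ : 0 < C := (length_pos_of_ne_nil (hσ.1 default)).trans_le (hC ⟨default, rfl⟩)
  obtain ⟨n, hn⟩ := hprim.exists_forall_exists_infix hσ hw (δ := ε / 3) (by positivity)
  refine ⟨2 * C ^ n, fun b v hv hlen => ?_⟩
  obtain ⟨u', ⟨k, hk⟩, hu'v⟩ :=
    exists_forall₂_dist_lt_of_mem_closure hv (ε := ε / 3) (by positivity)
  obtain ⟨c, hc⟩ := exists_iterate_infix_of_infix_iterate hσ.1 (fun a => hC ⟨a, rfl⟩) hC₀ n hk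
    (hu'v.length_eq ▸ hlen)
  obtain ⟨u₁, hu₁, hu₁w⟩ := hn c
  have hvu' : Forall₂ (fun a b => dist a b < ε / 3) v u' :=
    Forall₂.flip (hu'v.imp fun x y h => (dist_comm y x).trans_lt h)
  obtain ⟨u, hu, huu₁⟩ := hvu'.exists_infix (hu₁.trans hc)
  exact ⟨u, hu, (huu₁.dist_lt_add hu₁w).imp fun _ _ h => h.trans_eq (by ring)⟩

theorem exists_shift_dist_lt_of_mem_GXsub [CompactSpace K] (hσ : IsGenSubst σ)
    (hprim : GPrimitive σ) {x y : ℤ → K} (hx : x ∈ GXsub σ) (hy : y ∈ GXsub σ) (N : ℕ) {ε : ℝ}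
    (hε : 0 < ε) : ∃ n : ℤ, ∀ i : ℤ, i.natAbs ≤ N → dist (x (i + n)) (y i) < ε := by
  obtain ⟨a, hw⟩ := mem_iUnion.1 (hy (-N) N (by omega))
  obtain ⟨M, hM⟩ := hprim.exists_forall_length_le_exists_infix hσ hw hε
  obtain ⟨b, hv⟩ := mem_iUnion.1 (hx 0 M (by omega))
  obtain ⟨u, hu, huw⟩ := hM b _ hv (by rw [length_window]; omega)
  obtain ⟨p, hp⟩ := exists_getElem_eq_of_infix_window hu
  refine ⟨p + N, fun i hi => ?_⟩
  have hlen := huw.length_eq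
  rw [length_window] at hlen
  have hk : (((i + N).toNat : ℕ) : ℤ) = i + N := by omega
  have := huw.get (i := (i + N).toNat) (by omega) (by rw [length_window]; omega)
  simp only [get_eq_getElem, hp, getElem_window, hk] at this
  convert this using 3 <;> ring

end GenSubst

theorem stmt18_general {K : Type*} [MetricSpace K] [CompactSpace K] [Inhabited K]
    (σ : K → List K) (hσ : IsGenSubst σ) (hprim : GPrimitive σ) :
    ∀ x ∈ GXsub σ, GXsub σ ⊆ closure {y : ℤ → K | ∃ n : ℤ, shiftZ n x = y} := by
  intro x hx y hy
  refine mem_closure_of_forall_dist_lt fun N ε hε => ?_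
  obtain ⟨n, hn⟩ := exists_shift_dist_lt_of_mem_GXsub hσ hprim hx hy N hε
  exact ⟨shiftZ n x, ⟨n, rfl⟩, hn⟩

theorem stmt18 {K : Type*} [MetricSpace K] [CompactSpace K]
    [TotallyDisconnectedSpace K] [Nontrivial K] [Inhabited K]
    (σ : K → List K) (hσ : IsGenSubst σ) (hprim : GPrimitive σ) :
    ∀ x ∈ GXsub σ, GXsub σ ⊆ closure {y : ℤ → K | ∃ n : ℤ, shiftZ n x = y} :=
  stmt18_general σ hσ hprim
end
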